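/- Let n ≥ 3, M be positive integers with 6 | n, v₃(n) = 1 + v₃(M), and v₂(n) = 2, and suppose M³(n-1)²(n+4)⁴A⁷/(54·n⁴(n+1)²·R(n,M)) is a nonzero integer, where A = 6M - n(n+1)(n+5) and R(n,M) is the explicit degree-6 polynomial in M. Then n divides 12M. -/
import Mathlib

private theorem padicValInt_pow' {p : ℕ} [Fact p.Prime] {a : ℤ} (ha : a ≠ 0) (k : ℕ) :
    padicValInt p (a ^ k) = k * padicValInt p a := by
  induction k with
  | zero => simp [padicValInt.one]
  | succ k ih =>
    rw [pow_succ, padicValInt.mul (pow_ne_zero _ ha) ha, ih]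
    ring

private theorem padicValInt_eq_of {p : ℕ} [Fact p.Prime] {z : ℤ} (hz : z ≠ 0) {k : ℕ}
    (h1 : (p : ℤ) ^ k ∣ z) (h2 : ¬ (p : ℤ) ^ (k + 1) ∣ z) : padicValInt p z = k := by
  rcases (padicValInt_dvd_iff k z).mp h1 with h | h
  · exact absurd h hz
  have hb : padicValInt p z < k + 1 := by
    by_contra hcon
    exact h2 ((pow_dvd_pow _ (not_lt.mp hcon)).trans (padicValInt_dvd z))
  omega

theorem stmt (n M : ℤ) (hn : 3 ≤ n) (hM : 0 < M)
    (A : ℤ) (hA : A = 6*M - n*(n+1)*(n+5))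
    (R : ℤ) (hR : R = 2^14*3^6*M^6 - 2^13*3^7*n*(n+1)*(n+3)*M^5 + 2^9*3^5*n^2*(n+1)*(n^4+93*n^3+629*n^2+1339*n+818)*M^4 - 2^7*3^4*n^3*(n+1)^2*(13*n^5+436*n^4+3688*n^3+12782*n^2+19163*n+9998)*M^3 + 2^2*3^3*n^4*(n+1)^3*(n+2)*(n+7)^2*(5*n^4+447*n^3+3303*n^2+7873*n+5652)*M^2 - 2^2*3^3*n^5*(n+1)^4*(n+2)^2*(n+5)^2*(n+7)^3*(3*n+5)*M + n^6*(n+1)^5*(n+2)^3*(n+5)^3*(n+7)^4)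
    (hint : ∃ k : ℤ, k ≠ 0 ∧
      ((M^3*(n-1)^2*(n+4)^4*A^7 : ℚ) / (54*n^4*(n+1)^2*R) = (k : ℚ))) (h6 : 6 ∣ n)
    (hv3 : padicValInt 3 n = 1 + padicValInt 3 M) (hv2 : padicValInt 2 n = 2) :
    n ∣ 12 * M := by
  obtain ⟨k, hk0, hkq⟩ := hint
  have hMne : M ≠ 0 := hM.ne'
  have hnne : n ≠ 0 := by omega
  have hn1ne : n - 1 ≠ 0 := by omega
  have hn4ne : n + 4 ≠ 0 := by omega
  have hD : (54*(n:ℚ)^4*((n:ℚ)+1)^2*(R:ℚ)) ≠ 0 := by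
    intro h
    rw [h, div_zero] at hkq
    exact hk0 (by exact_mod_cast hkq.symm)
  have heq : M^3*(n-1)^2*(n+4)^4*A^7 = k * (54*n^4*(n+1)^2*R) := by
    have h2 := (div_eq_iff hD).mp hkq
    exact_mod_cast h2
  have hDZ : (54*n^4*(n+1)^2*R : ℤ) ≠ 0 := by
    intro h
    apply hD
    exact_mod_cast congrArg (fun z : ℤ => (z : ℚ)) h
  have hLne : M^3*(n-1)^2*(n+4)^4*A^7 ≠ 0 := by
    rw [heq]
    exact mul_ne_zero hk0 hDZ
  have hA0 : A ≠ 0 := by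
    intro h
    apply hLne
    rw [h]
    ring
  -- main valuation inequality
  have key : ∀ p : ℕ, p.Prime → padicValInt p n ≤ padicValInt p (12*M) := by
    intro p hp
    haveI := Fact.mk hp
    rw [show (12*M : ℤ) = 12*M from rfl, padicValInt.mul (by norm_num) hMne]
    rcases eq_or_ne p 2 with rfl | hp2
    · have h12 : padicValInt 2 (12:ℤ) = 2 :=
        padicValInt_eq_of (by norm_num) (by norm_num) (by norm_num)
      rw [hv2, h12]
      omega
    rcases eq_or_ne p 3 with rfl | hp3
    · have h12 : padicValInt 3 (12:ℤ) = 1 :=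
        padicValInt_eq_of (by norm_num) (by norm_num) (by norm_num)
      rw [hv3, h12]
    -- now p ≥ 5
    have hp5 : 5 ≤ p := by
      have h2 := hp.two_le
      by_contra hcon
      push_neg at hcon
      interval_cases p
      · exact hp2 rfl
      · exact hp3 rfl
      · exact absurd hp (by decide)
    have hpd12 : ¬ (p:ℤ) ∣ 12 := by
      intro h
      have hnat : p ∣ 12 := by exact_mod_cast h
      have := Nat.le_of_dvd (by norm_num) hnat
      interval_cases p <;> revert hnat hp <;> decide
    have h12 : padicValInt p (12:ℤ) = 0 := padicValInt.eq_zero_of_not_dvd hpd12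
    rw [h12]
    suffices h : padicValInt p n ≤ padicValInt p M by omega
    by_contra hcon
    push_neg at hcon
    set m := padicValInt p M with hm
    have hpn : (p:ℤ)^(m+1) ∣ n :=
      (pow_dvd_pow _ (by omega)).trans (padicValInt_dvd n)
    have hpmn : (p:ℤ)^m ∣ n := (pow_dvd_pow _ (by omega)).trans hpn
    have hpd : (p:ℤ) ∣ n := (dvd_pow_self _ (Nat.succ_ne_zero m)).trans hpn
    have hppM : ¬ (p:ℤ)^(m+1) ∣ M := by
      intro h
      rcases (padicValInt_dvd_iff (m+1) M).mp h with h' | h'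
      · exact hMne h'
      · omega
    have hnd2 : ¬ (p:ℤ) ∣ 2 := fun h => hpd12 (h.trans (by norm_num))
    have hnd3 : ¬ (p:ℤ) ∣ 3 := fun h => hpd12 (h.trans (by norm_num))
    have hnd6 : ¬ (p:ℤ) ∣ 6 := fun h => hpd12 (h.trans (by norm_num))
    -- p does not divide n-1 and n+4
    have hvn1 : padicValInt p (n-1) = 0 := by
      apply padicValInt.eq_zero_of_not_dvd
      intro h
      have h1 : (p:ℤ) ∣ 1 := by
        have := dvd_sub hpd h
        simpa using this
      have := Int.le_of_dvd one_pos h1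
      have : (5:ℤ) ≤ (p:ℤ) := by exact_mod_cast hp5
      omega
    have hvn4 : padicValInt p (n+4) = 0 := by
      apply padicValInt.eq_zero_of_not_dvd
      intro h
      have h4 : (p:ℤ) ∣ 4 := by
        have := dvd_sub h hpd
        simpa using this
      exact hpd12 (h4.trans (by norm_num))
    -- valuation of A is exactly m
    obtain ⟨u, hu⟩ := padicValInt_dvd (p := p) M
    obtain ⟨w, hw⟩ := hpmn
    have hvA : padicValInt p A = m := by
      apply padicValInt_eq_of hA0
      · exact ⟨6*u - w*((p:ℤ)^m*w+1)*((p:ℤ)^m*w+5), by rw [hA, hu, hw]; ring⟩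
      · intro h
        have h6M : (p:ℤ)^(m+1) ∣ 6*M := by
          have hsum : 6*M = A + n*(n+1)*(n+5) := by rw [hA]; ring
          rw [hsum]
          exact dvd_add h ((hpn.mul_right (n+1)).mul_right (n+5))
        rcases (padicValInt_dvd_iff (m+1) (6*M)).mp h6M with h' | h'
        · exact (mul_ne_zero (by norm_num) hMne) h'
        · rw [padicValInt.mul (by norm_num : (6:ℤ) ≠ 0) hMne,
            padicValInt.eq_zero_of_not_dvd hnd6] at h'
          omega
    -- valuation of the left-hand side is 10*m
    have hvLHS : padicValInt p (M^3*(n-1)^2*(n+4)^4*A^7) = 10*m := by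
      rw [padicValInt.mul (mul_ne_zero (mul_ne_zero (pow_ne_zero _ hMne) (pow_ne_zero _ hn1ne))
            (pow_ne_zero _ hn4ne)) (pow_ne_zero _ hA0),
          padicValInt.mul (mul_ne_zero (pow_ne_zero _ hMne) (pow_ne_zero _ hn1ne))
            (pow_ne_zero _ hn4ne),
          padicValInt.mul (pow_ne_zero _ hMne) (pow_ne_zero _ hn1ne),
          padicValInt_pow' hMne, padicValInt_pow' hn1ne, padicValInt_pow' hn4ne,
          padicValInt_pow' hA0, hvn1, hvn4, hvA, ← hm]
      ring
    -- p^(6m) divides R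
    have hRdvd : (p:ℤ)^(6*m) ∣ R := by
      rw [show 6*m = m*6 from by ring, pow_mul]
      refine ⟨2^14*3^6*u^6
        - 2^13*3^7*w*((p:ℤ)^m*w+1)*((p:ℤ)^m*w+3)*u^5
        + 2^9*3^5*w^2*((p:ℤ)^m*w+1)*(((p:ℤ)^m*w)^4+93*((p:ℤ)^m*w)^3+629*((p:ℤ)^m*w)^2+1339*((p:ℤ)^m*w)+818)*u^4
        - 2^7*3^4*w^3*((p:ℤ)^m*w+1)^2*(13*((p:ℤ)^m*w)^5+436*((p:ℤ)^m*w)^4+3688*((p:ℤ)^m*w)^3+12782*((p:ℤ)^m*w)^2+19163*((p:ℤ)^m*w)+9998)*u^3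
        + 2^2*3^3*w^4*((p:ℤ)^m*w+1)^3*((p:ℤ)^m*w+2)*((p:ℤ)^m*w+7)^2*(5*((p:ℤ)^m*w)^4+447*((p:ℤ)^m*w)^3+3303*((p:ℤ)^m*w)^2+7873*((p:ℤ)^m*w)+5652)*u^2
        - 2^2*3^3*w^5*((p:ℤ)^m*w+1)^4*((p:ℤ)^m*w+2)^2*((p:ℤ)^m*w+5)^2*((p:ℤ)^m*w+7)^3*(3*((p:ℤ)^m*w)+5)*u
        + w^6*((p:ℤ)^m*w+1)^5*((p:ℤ)^m*w+2)^3*((p:ℤ)^m*w+5)^3*((p:ℤ)^m*w+7)^4, ?_⟩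
      rw [hR, hu, hw]
      ring
    -- p^(10m+4) divides the left-hand side
    have hdvd : (p:ℤ)^(10*m+4) ∣ M^3*(n-1)^2*(n+4)^4*A^7 := by
      rw [heq]
      have h1 : (p:ℤ)^(4*(m+1)) ∣ n^4 := by
        rw [show 4*(m+1) = (m+1)*4 from by ring, pow_mul]
        exact pow_dvd_pow_of_dvd hpn 4
      have h2 : (p:ℤ)^(10*m+4) ∣ n^4 * R := by
        rw [show 10*m+4 = 4*(m+1) + 6*m from by ring, pow_add]
        exact mul_dvd_mul h1 hRdvd
      exact h2.trans ⟨k*54*(n+1)^2, by ring⟩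
    rcases (padicValInt_dvd_iff (10*m+4) _).mp hdvd with h' | h'
    · exact hLne h'
    · rw [hvLHS] at h'
      omega
  -- conclude divisibility from prime valuations
  have h12M : (12:ℤ)*M ≠ 0 := mul_ne_zero (by norm_num) hMne
  rw [← Int.natAbs_dvd_natAbs]
  rw [← Nat.factorization_le_iff_dvd (Int.natAbs_ne_zero.mpr hnne)
    (Int.natAbs_ne_zero.mpr h12M)]
  refine Finsupp.le_def.mpr fun p => ?_
  by_cases hp : p.Prime
  · rw [Nat.factorization_def _ hp, Nat.factorization_def _ hp]
    exact key p hp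
  · simp [Nat.factorization_eq_zero_of_not_prime _ hp]
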